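/- Let 1 ≤ q < ∞. Let X be a real Banach space with an unconditional basis (e_n)_{n∈ℕ} satisfying a lower q-estimate and Y a real Banach space with an unconditional basis (y_n)_{n∈ℕ} satisfying an upper q-estimate. Let (u_n)_{n∈ℕ} be disjointly finitely supported with respect to (e_n) and (v_n)_{n∈ℕ} be disjointly finitely supported with respect to (y_n), and suppose the sequence (u_n, v_n)_{n∈ℕ} in X × Y (with the sup norm) is semi-normalized. Then there is a strictly increasing sequence (n_k)_{k∈ℕ} such that the sequence ((u_{n_k}, v_{n_k}))_{k∈ℕ} is equivalent either to some sequence in X disjointly finitely supported with respect to (e_n), or to some sequence in Y disjointly finitely supported with respect to (y_n). -/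

import Mathlib

open scoped BigOperators

/-- `e` is a Schauder basis of `X`: every vector has a unique expansion as a norm-convergent
series `∑ n, a n • e n` (partial sums over `Finset.range N`). -/
def IsSchauderBasis {X : Type*} [NormedAddCommGroup X] [NormedSpace ℝ X] (e : ℕ → X) : Prop :=
  ∀ x : X, ∃! a : ℕ → ℝ,
    Filter.Tendsto (fun N => ∑ n ∈ Finset.range N, a n • e n) Filter.atTop (nhds x)

/-- `u` is a block basic sequence with respect to `e`. -/
def IsBlockBasic {X : Type*} [NormedAddCommGroup X] [NormedSpace ℝ X]
    (e : ℕ → X) (u : ℕ → X) : Prop :=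
  ∃ (A : ℕ → Finset ℕ) (a : ℕ → ℝ),
    (∀ j, (A j).Nonempty) ∧
    (∀ j, ∀ m ∈ A j, ∀ k ∈ A (j + 1), m < k) ∧
    (∀ j, u j = ∑ n ∈ A j, a n • e n)

/-- A sequence is semi-normalized if its norms are bounded away from zero and from infinity. -/
def SemiNormalized {X : Type*} [NormedAddCommGroup X] (u : ℕ → X) : Prop :=
  ∃ c C : ℝ, 0 < c ∧ ∀ j, c ≤ ‖u j‖ ∧ ‖u j‖ ≤ C

/-- Two sequences (possibly in different spaces) are equivalent. -/
def SeqEquiv {X Y : Type*} [NormedAddCommGroup X] [NormedSpace ℝ X]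
    [NormedAddCommGroup Y] [NormedSpace ℝ Y] (u : ℕ → X) (w : ℕ → Y) : Prop :=
  ∃ C : ℝ, 1 ≤ C ∧ ∀ (a : ℕ → ℝ) (s : Finset ℕ),
    C⁻¹ * ‖∑ j ∈ s, a j • w j‖ ≤ ‖∑ j ∈ s, a j • u j‖ ∧
    ‖∑ j ∈ s, a j • u j‖ ≤ C * ‖∑ j ∈ s, a j • w j‖

/-- A bounded linear operator is compact if the image of the closed unit ball is
relatively compact. -/
def CompactOp {X Y : Type*} [NormedAddCommGroup X] [NormedSpace ℝ X]
    [NormedAddCommGroup Y] [NormedSpace ℝ Y] (T : Y →L[ℝ] X) : Prop :=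
  IsCompact (closure (T '' Metric.closedBall 0 1))

/-- `e` is an unconditional basis of `X`. -/
def IsUncondBasis {X : Type*} [NormedAddCommGroup X] [NormedSpace ℝ X] (e : ℕ → X) : Prop :=
  (∀ n, e n ≠ 0) ∧ ∀ x : X, ∃! a : ℕ → ℝ, HasSum (fun n => a n • e n) x

/-- `u` is disjointly finitely supported with respect to `e`. -/
def DisjSupported {X : Type*} [NormedAddCommGroup X] [NormedSpace ℝ X]
    (e : ℕ → X) (u : ℕ → X) : Prop :=
  ∃ A : ℕ → Finset ℕ, Pairwise (Function.onFun Disjoint A) ∧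
    ∀ j, u j ∈ Submodule.span ℝ (e '' (A j : Set ℕ))

/-- The basis `e` satisfies a lower `q`-estimate. -/
def LowerEstimate {X : Type*} [NormedAddCommGroup X] [NormedSpace ℝ X]
    (e : ℕ → X) (q : ℝ) : Prop :=
  ∃ C : ℝ, 0 < C ∧ ∀ (m : ℕ) (f : Fin m → X) (A : Fin m → Finset ℕ),
    Pairwise (Function.onFun Disjoint A) →
    (∀ i, f i ∈ Submodule.span ℝ (e '' (A i : Set ℕ))) →
    (∑ i, ‖f i‖ ^ q) ^ (1 / q) ≤ C * ‖∑ i, f i‖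

/-- The basis `e` satisfies an upper `q`-estimate. -/
def UpperEstimate {X : Type*} [NormedAddCommGroup X] [NormedSpace ℝ X]
    (e : ℕ → X) (q : ℝ) : Prop :=
  ∃ C : ℝ, 0 < C ∧ ∀ (m : ℕ) (f : Fin m → X) (A : Fin m → Finset ℕ),
    Pairwise (Function.onFun Disjoint A) →
    (∀ i, f i ∈ Submodule.span ℝ (e '' (A i : Set ℕ))) →
    ‖∑ i, f i‖ ≤ C * (∑ i, ‖f i‖ ^ q) ^ (1 / q)

/-- `u` is equivalent to the canonical basis of `ℓ_q`. -/
def EquivCanonLq {X : Type*} [NormedAddCommGroup X] [NormedSpace ℝ X]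
    (u : ℕ → X) (q : ℝ) : Prop :=
  ∃ C : ℝ, 1 ≤ C ∧ ∀ (a : ℕ → ℝ) (s : Finset ℕ),
    C⁻¹ * (∑ j ∈ s, |a j| ^ q) ^ (1 / q) ≤ ‖∑ j ∈ s, a j • u j‖ ∧
    ‖∑ j ∈ s, a j • u j‖ ≤ C * (∑ j ∈ s, |a j| ^ q) ^ (1 / q)

/-- `Z` contains an isomorphic copy of `ℓ_q`: there is a bounded linear map `J : ℓ_q → Z`
which is bounded below. -/
def ContainsLp (Z : Type*) [NormedAddCommGroup Z] [NormedSpace ℝ Z] (q : ℝ) : Prop :=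
  ∃ (J : lp (fun _ : ℕ => ℝ) (ENNReal.ofReal q) →ₗ[ℝ] Z) (C c : ℝ), 0 < c ∧
    ∀ f, ‖J f‖ ≤ C * ‖f‖ ∧ c * ‖f‖ ≤ ‖J f‖

/-- `T` is strictly singular: it is bounded below on no infinite-dimensional subspace. -/
def StrictlySingular {X Y : Type*} [NormedAddCommGroup X] [NormedSpace ℝ X]
    [NormedAddCommGroup Y] [NormedSpace ℝ Y] (T : Y →L[ℝ] X) : Prop :=
  ∀ (Z : Submodule ℝ Y) (c : ℝ), 0 < c → (∀ z ∈ Z, c * ‖z‖ ≤ ‖T z‖) →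
    FiniteDimensional ℝ Z

/-- A finite family of Banach spaces is splitting for unconditional bases. -/
def SplittingFamily {ι : Type*} [Fintype ι] (Z : ι → Type*)
    [∀ i, NormedAddCommGroup (Z i)] [∀ i, NormedSpace ℝ (Z i)] : Prop :=
  ∀ w : ℕ → (∀ i, Z i), IsUncondBasis w →
    ∃ N : ι → Set ℕ, Pairwise (Function.onFun Disjoint N) ∧ (⋃ i, N i) = Set.univ ∧
      ∀ i, Nonempty ((Submodule.span ℝ (w '' N i)).topologicalClosure ≃L[ℝ] Z i)

/-- A pair of Banach spaces is splitting for unconditional bases. -/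
def SplittingPair (U V : Type*) [NormedAddCommGroup U] [NormedSpace ℝ U]
    [NormedAddCommGroup V] [NormedSpace ℝ V] : Prop :=
  ∀ w : ℕ → U × V, IsUncondBasis w →
    ∃ N₁ N₂ : Set ℕ, Disjoint N₁ N₂ ∧ N₁ ∪ N₂ = Set.univ ∧
      Nonempty ((Submodule.span ℝ (w '' N₁)).topologicalClosure ≃L[ℝ] U) ∧
      Nonempty ((Submodule.span ℝ (w '' N₂)).topologicalClosure ≃L[ℝ] V)

/-- `U` has a unique, up to equivalence and permutation, unconditional basis. -/
def HasUTAPBasis (U : Type*) [NormedAddCommGroup U] [NormedSpace ℝ U] : Prop :=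
  ∃ e : ℕ → U, IsUncondBasis e ∧ SemiNormalized e ∧
    ∀ f : ℕ → U, IsUncondBasis f → SemiNormalized f →
      ∃ π : Equiv.Perm ℕ, SeqEquiv (fun n => f (π n)) e

/-- `y` is a subsymmetric basic sequence: semi-normalized, an unconditional basis of its
closed linear span, and equivalent to all of its subsequences. -/
def IsSubsymmetric {X : Type*} [NormedAddCommGroup X] [NormedSpace ℝ X] (y : ℕ → X) : Prop :=
  SemiNormalized y ∧ (∀ n, y n ≠ 0) ∧
  (∀ x : X, x ∈ (Submodule.span ℝ (Set.range y)).topologicalClosure →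
    ∃! a : ℕ → ℝ, HasSum (fun n => a n • y n) x) ∧
  ∀ k : ℕ → ℕ, StrictMono k → SeqEquiv (fun n => y (k n)) y

/-! If `‖uₙ‖` does not tend to zero, pass to a subsequence with `‖uₙ‖ ≥ ε`. The upper
`q`-estimate in `Y` and the lower one in `X` give
`‖∑ aₖ vₖ‖ ≲ (∑ ‖aₖ vₖ‖^q)^{1/q} ≲ (∑ ‖aₖ uₖ‖^q)^{1/q} ≲ ‖∑ aₖ uₖ‖`,
so the pairs are equivalent to the `uₖ`.

Otherwise pass to a subsequence with `‖uₖ‖ ≤ 2⁻ᵏ ‖vₖ‖`. The `vₖ` are disjoint blocks of an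
unconditional basis, so `‖aⱼ vⱼ‖ ≲ ‖∑ aₖ vₖ‖`, which absorbs the `u`-part: the pairs are
equivalent to the `vₖ`. That the projections `x ↦ ∑_{n ∈ F} cₙ(x) yₙ` onto finite sets of
coordinates are uniformly bounded is the closed graph theorem for the linear map
`x ↦ (∑_{n ∈ F} cₙ(x) yₙ)_F` from `Y` to `ℓ^∞(Finset ℕ, Y)`. -/

open Filter Topology
open scoped ENNReal

lemma HasSum.exists_norm_sum_le {ι E : Type*} [SeminormedAddCommGroup E] {f : ι → E} {x : E}
    (h : HasSum f x) : ∃ M, ∀ F : Finset ι, ‖∑ i ∈ F, f i‖ ≤ M := by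
  classical
  obtain ⟨s, hs⟩ := cauchySeq_finset_iff_vanishing_norm.1 h.cauchySeq 1 one_pos
  refine ⟨1 + ∑ i ∈ s, ‖f i‖, fun F => ?_⟩
  rw [← Finset.sum_inter_add_sum_sdiff F s]
  calc ‖∑ i ∈ F ∩ s, f i + ∑ i ∈ F \ s, f i‖
      ≤ ∑ i ∈ F ∩ s, ‖f i‖ + ‖∑ i ∈ F \ s, f i‖ :=
        (norm_add_le _ _).trans (by gcongr; exact norm_sum_le _ _)
    _ ≤ ∑ i ∈ s, ‖f i‖ + 1 := by
        gcongr
        · exact Finset.inter_subset_right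
        · exact (hs _ Finset.sdiff_disjoint).le
    _ = 1 + ∑ i ∈ s, ‖f i‖ := add_comm _ _

namespace IsUncondBasis

variable {Y : Type*} [NormedAddCommGroup Y] [NormedSpace ℝ Y] {y : ℕ → Y} (hy : IsUncondBasis y)

noncomputable def coeff (x : Y) : ℕ → ℝ := (hy.2 x).choose

lemma hasSum_coeff (x : Y) : HasSum (fun n => hy.coeff x n • y n) x :=
  (hy.2 x).choose_spec.1

lemma coeff_eq_of_hasSum {x : Y} {a : ℕ → ℝ} (h : HasSum (fun n => a n • y n) x) :
    hy.coeff x = a :=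
  ((hy.2 x).choose_spec.2 a h).symm

noncomputable def coeffₗ : Y →ₗ[ℝ] ℕ → ℝ where
  toFun := hy.coeff
  map_add' x z := hy.coeff_eq_of_hasSum <| by
    simpa only [Pi.add_apply, add_smul] using (hy.hasSum_coeff x).add (hy.hasSum_coeff z)
  map_smul' r x := hy.coeff_eq_of_hasSum <| by
    simpa only [Pi.smul_apply, smul_eq_mul, RingHom.id_apply, mul_smul] using
      (hy.hasSum_coeff x).const_smul r

lemma coeff_basis (m : ℕ) : hy.coeff (y m) = Pi.single m 1 :=
  hy.coeff_eq_of_hasSum <| by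
    convert hasSum_single (f := fun n => (Pi.single m (1 : ℝ) : ℕ → ℝ) n • y n) m
      (fun n hn => by simp [hn]) using 1
    simp

noncomputable def proj (F : Finset ℕ) : Y →ₗ[ℝ] Y :=
  ∑ n ∈ F, (LinearMap.proj n ∘ₗ hy.coeffₗ).smulRight (y n)

lemma proj_apply (F : Finset ℕ) (x : Y) : hy.proj F x = ∑ n ∈ F, hy.coeff x n • y n := by
  simp [proj, coeffₗ]

lemma proj_basis (F : Finset ℕ) (m : ℕ) : hy.proj F (y m) = if m ∈ F then y m else 0 := by
  simp [proj_apply, coeff_basis, Pi.single_apply, ite_smul]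

lemma bddAbove_norm_proj (x : Y) : BddAbove (Set.range fun F => ‖hy.proj F x‖) := by
  obtain ⟨M, hM⟩ := (hy.hasSum_coeff x).exists_norm_sum_le
  exact ⟨M, by rintro _ ⟨F, rfl⟩; simpa only [proj_apply] using hM F⟩

noncomputable def partialSums : Y →ₗ[ℝ] lp (fun _ : Finset ℕ => Y) ∞ where
  toFun x := ⟨fun F => hy.proj F x, memℓp_infty (hy.bddAbove_norm_proj x)⟩
  map_add' x z := by ext F; exact map_add (hy.proj F) x z
  map_smul' r x := by ext F; exact map_smul (hy.proj F) r x

lemma partialSums_apply (x : Y) (F : Finset ℕ) : hy.partialSums x F = hy.proj F x := rfl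

theorem continuous_partialSums [CompleteSpace Y] : Continuous hy.partialSums := by
  refine hy.partialSums.continuous_of_seq_closed_graph fun xs x G hx hG => ?_
  have hunif : TendstoUniformly (fun k F => hy.proj F (xs k)) G atTop := by
    refine Metric.tendstoUniformly_iff.2 fun ε hε => ?_
    filter_upwards [Metric.tendsto_nhds.1 hG ε hε] with k hk F
    rw [dist_eq_norm, norm_sub_rev] at hk
    rw [dist_eq_norm]
    exact (lp.norm_apply_le_norm ENNReal.top_ne_zero _ F).trans_lt hk
  have hcoeff : ∀ n, ∃ d : ℝ, G {n} = d • y n ∧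
      Tendsto (fun k => hy.coeff (xs k) n) atTop (𝓝 d) := by
    intro n
    have hemb := isClosedEmbedding_smul_left (𝕜 := ℝ) (hy.1 n)
    have hlim : Tendsto (fun k => hy.coeff (xs k) n • y n) atTop (𝓝 (G {n})) := by
      simpa only [proj_apply, Finset.sum_singleton] using hunif.tendsto_at {n}
    obtain ⟨d, hd⟩ := hemb.isClosed_range.mem_of_tendsto hlim
      (Eventually.of_forall fun k => Set.mem_range_self _)
    refine ⟨d, hd.symm, ?_⟩
    rw [hemb.isEmbedding.tendsto_nhds_iff]
    simpa only [Function.comp_def, hd] using hlim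
  choose d hGd hd using hcoeff
  have hG_eq : ∀ F, G F = ∑ n ∈ F, d n • y n := fun F =>
    tendsto_nhds_unique (hunif.tendsto_at F) <| by
      simpa only [proj_apply] using tendsto_finsetSum F fun n _ => (hd n).smul_const (y n)
  have hsum : HasSum (fun n => d n • y n) x := by
    refine TendstoUniformly.tendsto_of_eventually_tendsto ?_
      (Eventually.of_forall fun k => hy.hasSum_coeff (xs k)) hx
    simpa only [← hG_eq, proj_apply] using hunif
  ext F
  rw [partialSums_apply, proj_apply, hy.coeff_eq_of_hasSum hsum, hG_eq]

theorem exists_norm_proj_le [CompleteSpace Y] :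
    ∃ K, 0 ≤ K ∧ ∀ (F : Finset ℕ) (x : Y), ‖hy.proj F x‖ ≤ K * ‖x‖ := by
  let Φ : Y →L[ℝ] lp (fun _ : Finset ℕ => Y) ∞ := ⟨hy.partialSums, hy.continuous_partialSums⟩
  refine ⟨‖Φ‖, norm_nonneg _, fun F x => ?_⟩
  calc ‖hy.proj F x‖ = ‖Φ x F‖ := rfl
    _ ≤ ‖Φ x‖ := lp.norm_apply_le_norm ENNReal.top_ne_zero _ F
    _ ≤ ‖Φ‖ * ‖x‖ := Φ.le_opNorm x

lemma proj_eq_self_of_mem_span {F : Finset ℕ} {x : Y} (hx : x ∈ Submodule.span ℝ (y '' F)) :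
    hy.proj F x = x := by
  refine LinearMap.eqOn_span' (f := hy.proj F) (g := LinearMap.id) ?_ hx
  rintro _ ⟨m, hm, rfl⟩
  simp [proj_basis, Finset.mem_coe.1 hm]

lemma proj_eq_zero_of_mem_span {F A : Finset ℕ} (hFA : Disjoint F A) {x : Y}
    (hx : x ∈ Submodule.span ℝ (y '' A)) : hy.proj F x = 0 := by
  refine LinearMap.eqOn_span' (f := hy.proj F) (g := 0) ?_ hx
  rintro _ ⟨m, hm, rfl⟩
  simp [proj_basis, Finset.disjoint_right.1 hFA (Finset.mem_coe.1 hm)]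

end IsUncondBasis

section Blocks

variable {X Y : Type*} [NormedAddCommGroup X] [NormedSpace ℝ X]
  [NormedAddCommGroup Y] [NormedSpace ℝ Y]

lemma DisjSupported.comp_injective {e u : ℕ → X} (hu : DisjSupported e u) {φ : ℕ → ℕ}
    (hφ : Function.Injective φ) : DisjSupported e (u ∘ φ) :=
  let ⟨A, hA, huA⟩ := hu
  ⟨A ∘ φ, hA.comp_of_injective hφ, fun j => huA (φ j)⟩

theorem DisjSupported.exists_norm_smul_le [CompleteSpace Y] {y v : ℕ → Y} (hy : IsUncondBasis y)
    (hv : DisjSupported y v) :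
    ∃ K, 0 ≤ K ∧ ∀ (a : ℕ → ℝ) (s : Finset ℕ), ∀ j ∈ s,
      ‖a j • v j‖ ≤ K * ‖∑ i ∈ s, a i • v i‖ := by
  obtain ⟨A, hA, hvA⟩ := hv
  obtain ⟨K, hK0, hK⟩ := hy.exists_norm_proj_le
  refine ⟨K, hK0, fun a s j hj => ?_⟩
  have hproj : hy.proj (A j) (∑ i ∈ s, a i • v i) = a j • v j := by
    rw [map_sum, Finset.sum_eq_single_of_mem j hj]
    · rw [map_smul, hy.proj_eq_self_of_mem_span (hvA j)]
    · intro i _ hij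
      rw [map_smul, hy.proj_eq_zero_of_mem_span (hA hij.symm) (hvA i), smul_zero]
  rw [← hproj]
  exact hK _ _

lemma norm_sum_smul_le_of_norm_le_geometric {u : ℕ → X} {v : ℕ → Y} {K : ℝ} (hK0 : 0 ≤ K)
    (hK : ∀ (a : ℕ → ℝ) (s : Finset ℕ), ∀ j ∈ s, ‖a j • v j‖ ≤ K * ‖∑ i ∈ s, a i • v i‖)
    (huv : ∀ n, ‖u n‖ ≤ (1 / 2) ^ n * ‖v n‖) (a : ℕ → ℝ) (s : Finset ℕ) :
    ‖∑ i ∈ s, a i • u i‖ ≤ 2 * K * ‖∑ i ∈ s, a i • v i‖ := by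
  have hgeom : ∑ i ∈ s, (1 / 2 : ℝ) ^ i ≤ 2 :=
    (summable_geometric_two.sum_le_tsum s fun _ _ => by positivity).trans_eq tsum_geometric_two
  calc ‖∑ i ∈ s, a i • u i‖ ≤ ∑ i ∈ s, ‖a i • u i‖ := norm_sum_le _ _
    _ ≤ ∑ i ∈ s, (1 / 2) ^ i * (K * ‖∑ i ∈ s, a i • v i‖) := by
        refine Finset.sum_le_sum fun i hi => ?_
        calc ‖a i • u i‖ ≤ (1 / 2) ^ i * ‖a i • v i‖ := by
              rw [norm_smul, norm_smul, mul_left_comm]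
              exact mul_le_mul_of_nonneg_left (huv i) (norm_nonneg _)
          _ ≤ _ := by gcongr; exact hK a s i hi
    _ = (∑ i ∈ s, (1 / 2 : ℝ) ^ i) * (K * ‖∑ i ∈ s, a i • v i‖) := (Finset.sum_mul ..).symm
    _ ≤ 2 * K * ‖∑ i ∈ s, a i • v i‖ := by
        rw [mul_assoc]; gcongr

end Blocks

lemma rpow_sum_rpow_le_mul {ι : Type*} {s : Finset ι} {f g : ι → ℝ} {q c : ℝ} (hq : 0 < q)
    (hc : 0 ≤ c) (hf : ∀ i ∈ s, 0 ≤ f i) (hg : ∀ i ∈ s, 0 ≤ g i) (hfg : ∀ i ∈ s, f i ≤ c * g i) :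
    (∑ i ∈ s, f i ^ q) ^ (1 / q) ≤ c * (∑ i ∈ s, g i ^ q) ^ (1 / q) := by
  have hgq : 0 ≤ ∑ i ∈ s, g i ^ q := Finset.sum_nonneg fun i hi => Real.rpow_nonneg (hg i hi) q
  calc (∑ i ∈ s, f i ^ q) ^ (1 / q) ≤ (∑ i ∈ s, (c * g i) ^ q) ^ (1 / q) := by
        refine Real.rpow_le_rpow (Finset.sum_nonneg fun i hi => Real.rpow_nonneg (hf i hi) q)
          (Finset.sum_le_sum fun i hi => Real.rpow_le_rpow (hf i hi) (hfg i hi) hq.le)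
          (by positivity)
    _ = (c ^ q * ∑ i ∈ s, g i ^ q) ^ (1 / q) := by
        rw [Finset.mul_sum]
        exact congrArg (· ^ (1 / q)) (Finset.sum_congr rfl fun i hi => Real.mul_rpow hc (hg i hi))
    _ = c * (∑ i ∈ s, g i ^ q) ^ (1 / q) := by
        rw [Real.mul_rpow (Real.rpow_nonneg hc q) hgq, ← Real.rpow_mul hc,
          mul_one_div_cancel hq.ne', Real.rpow_one]

lemma Finset.sum_fin_equivFin {M : Type*} [AddCommMonoid M] (s : Finset ℕ) (F : ℕ → M) :
    ∑ i : Fin s.card, F (s.equivFin.symm i) = ∑ k ∈ s, F k :=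
  (s.equivFin.symm.sum_comp fun k : s => F k).trans (Finset.sum_coe_sort s F)

section Estimates

variable {X : Type*} [NormedAddCommGroup X] [NormedSpace ℝ X] {e : ℕ → X} {q : ℝ}

lemma LowerEstimate.exists_finset (h : LowerEstimate e q) :
    ∃ C, 0 < C ∧ ∀ (s : Finset ℕ) (f : ℕ → X) (A : ℕ → Finset ℕ),
      Pairwise (Function.onFun Disjoint A) → (∀ i, f i ∈ Submodule.span ℝ (e '' (A i : Set ℕ))) →
      (∑ i ∈ s, ‖f i‖ ^ q) ^ (1 / q) ≤ C * ‖∑ i ∈ s, f i‖ := by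
  obtain ⟨C, hC, hCe⟩ := h
  refine ⟨C, hC, fun s f A hA hf => ?_⟩
  have hinj : Function.Injective fun i : Fin s.card => (s.equivFin.symm i : ℕ) :=
    Subtype.val_injective.comp s.equivFin.symm.injective
  simpa only [Finset.sum_fin_equivFin s f, Finset.sum_fin_equivFin s fun k => ‖f k‖ ^ q] using
    hCe s.card _ _ (hA.comp_of_injective hinj) fun i => hf (s.equivFin.symm i)

lemma UpperEstimate.exists_finset (h : UpperEstimate e q) :
    ∃ C, 0 < C ∧ ∀ (s : Finset ℕ) (f : ℕ → X) (A : ℕ → Finset ℕ),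
      Pairwise (Function.onFun Disjoint A) → (∀ i, f i ∈ Submodule.span ℝ (e '' (A i : Set ℕ))) →
      ‖∑ i ∈ s, f i‖ ≤ C * (∑ i ∈ s, ‖f i‖ ^ q) ^ (1 / q) := by
  obtain ⟨C, hC, hCe⟩ := h
  refine ⟨C, hC, fun s f A hA hf => ?_⟩
  have hinj : Function.Injective fun i : Fin s.card => (s.equivFin.symm i : ℕ) :=
    Subtype.val_injective.comp s.equivFin.symm.injective
  simpa only [Finset.sum_fin_equivFin s f, Finset.sum_fin_equivFin s fun k => ‖f k‖ ^ q] using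
    hCe s.card _ _ (hA.comp_of_injective hinj) fun i => hf (s.equivFin.symm i)

end Estimates

section Pairs

variable {X Y : Type*} [NormedAddCommGroup X] [NormedSpace ℝ X]
  [NormedAddCommGroup Y] [NormedSpace ℝ Y]

theorem norm_sum_smul_le_of_lowerEstimate_of_upperEstimate {e u : ℕ → X} {y v : ℕ → Y}
    {q ε C : ℝ} (hq : 0 < q) (hlow : LowerEstimate e q) (hup : UpperEstimate y q)
    (hu : DisjSupported e u) (hv : DisjSupported y v) (hε : 0 < ε) (hu_ge : ∀ n, ε ≤ ‖u n‖)
    (hv_le : ∀ n, ‖v n‖ ≤ C) :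
    ∃ K, ∀ (a : ℕ → ℝ) (s : Finset ℕ), ‖∑ i ∈ s, a i • v i‖ ≤ K * ‖∑ i ∈ s, a i • u i‖ := by
  obtain ⟨CX, -, hX⟩ := hlow.exists_finset
  obtain ⟨CY, hCY, hY⟩ := hup.exists_finset
  obtain ⟨A, hA, huA⟩ := hu
  obtain ⟨B, hB, hvB⟩ := hv
  have hCε : 0 ≤ C / ε := div_nonneg ((norm_nonneg _).trans (hv_le 0)) hε.le
  have hsmul : ∀ (a : ℕ → ℝ) i, ‖a i • v i‖ ≤ C / ε * ‖a i • u i‖ := fun a i =>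
    calc ‖a i • v i‖ = ‖a i‖ * ‖v i‖ := norm_smul _ _
      _ ≤ ‖a i‖ * C := by gcongr; exact hv_le i
      _ = C / ε * (‖a i‖ * ε) := by field_simp
      _ ≤ C / ε * (‖a i‖ * ‖u i‖) := by gcongr; exact hu_ge i
      _ = C / ε * ‖a i • u i‖ := by rw [norm_smul]
  refine ⟨CY * (C / ε) * CX, fun a s => ?_⟩
  calc ‖∑ i ∈ s, a i • v i‖ ≤ CY * (∑ i ∈ s, ‖a i • v i‖ ^ q) ^ (1 / q) :=
        hY s _ B hB fun i => Submodule.smul_mem _ _ (hvB i)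
    _ ≤ CY * (C / ε * (∑ i ∈ s, ‖a i • u i‖ ^ q) ^ (1 / q)) := by
        gcongr
        exact rpow_sum_rpow_le_mul hq hCε (fun _ _ => norm_nonneg _) (fun _ _ => norm_nonneg _)
          fun i _ => hsmul a i
    _ ≤ CY * (C / ε * (CX * ‖∑ i ∈ s, a i • u i‖)) := by
        gcongr
        exact hX s _ A hA fun i => Submodule.smul_mem _ _ (huA i)
    _ = CY * (C / ε) * CX * ‖∑ i ∈ s, a i • u i‖ := by ring

lemma norm_sum_smul_prod (u : ℕ → X) (v : ℕ → Y) (a : ℕ → ℝ) (s : Finset ℕ) :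
    ‖∑ i ∈ s, a i • ((u i, v i) : X × Y)‖ = max ‖∑ i ∈ s, a i • u i‖ ‖∑ i ∈ s, a i • v i‖ := by
  rw [Prod.norm_def, Prod.fst_sum, Prod.snd_sum]
  simp only [Prod.smul_fst, Prod.smul_snd]

lemma seqEquiv_of_norm_eq_max {W Z Z' : Type*} [NormedAddCommGroup W] [NormedSpace ℝ W]
    [NormedAddCommGroup Z] [NormedSpace ℝ Z] [NormedAddCommGroup Z'] [NormedSpace ℝ Z']
    {w : ℕ → W} {z : ℕ → Z} {z' : ℕ → Z'} {K : ℝ}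
    (hw : ∀ (a : ℕ → ℝ) (s : Finset ℕ),
      ‖∑ i ∈ s, a i • w i‖ = max ‖∑ i ∈ s, a i • z i‖ ‖∑ i ∈ s, a i • z' i‖)
    (hK : ∀ (a : ℕ → ℝ) (s : Finset ℕ), ‖∑ i ∈ s, a i • z' i‖ ≤ K * ‖∑ i ∈ s, a i • z i‖) :
    SeqEquiv w z := by
  have h1 : 1 ≤ max 1 K := le_max_left _ _
  refine ⟨max 1 K, h1, fun a s => ⟨?_, ?_⟩⟩ <;> rw [hw]
  · exact (mul_le_of_le_one_left (norm_nonneg _) (inv_le_one_of_one_le₀ h1)).trans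
      (le_max_left _ _)
  · exact max_le (le_mul_of_one_le_left (norm_nonneg _) h1)
      ((hK a s).trans (by gcongr; exact le_max_right _ _))

lemma seqEquiv_prod_fst {u : ℕ → X} {v : ℕ → Y} {K : ℝ}
    (h : ∀ (a : ℕ → ℝ) (s : Finset ℕ), ‖∑ i ∈ s, a i • v i‖ ≤ K * ‖∑ i ∈ s, a i • u i‖) :
    SeqEquiv (fun i => ((u i, v i) : X × Y)) u :=
  seqEquiv_of_norm_eq_max (norm_sum_smul_prod u v) h

lemma seqEquiv_prod_snd {u : ℕ → X} {v : ℕ → Y} {K : ℝ}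
    (h : ∀ (a : ℕ → ℝ) (s : Finset ℕ), ‖∑ i ∈ s, a i • u i‖ ≤ K * ‖∑ i ∈ s, a i • v i‖) :
    SeqEquiv (fun i => ((u i, v i) : X × Y)) v :=
  seqEquiv_of_norm_eq_max (fun a s => (norm_sum_smul_prod u v a s).trans (max_comm _ _)) h

end Pairs

lemma exists_strictMono_norm_le_geometric {X Y : Type*} [NormedAddCommGroup X]
    [NormedAddCommGroup Y] {u : ℕ → X} {v : ℕ → Y} {c : ℝ} (hc : 0 < c)
    (huv : ∀ n, c ≤ ‖((u n, v n) : X × Y)‖) (hu : Tendsto (fun n => ‖u n‖) atTop (𝓝 0)) :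
    ∃ φ : ℕ → ℕ, StrictMono φ ∧ ∀ k, ‖u (φ k)‖ ≤ (1 / 2) ^ k * ‖v (φ k)‖ := by
  refine extraction_forall_of_eventually (P := fun k n => ‖u n‖ ≤ (1 / 2) ^ k * ‖v n‖)
    fun k => ?_
  have hk : (0 : ℝ) < (1 / 2) ^ k * c := by positivity
  filter_upwards [hu.eventually (gt_mem_nhds hk)] with n hn
  have hv : c ≤ ‖v n‖ := by
    have hlt : ‖u n‖ < c :=
      hn.trans_le (mul_le_of_le_one_left hc.le (pow_le_one₀ (by norm_num) (by norm_num)))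
    simpa [Prod.norm_def, hlt.not_ge] using huv n
  exact hn.le.trans (by gcongr)

theorem statement10_general {X Y : Type*} [NormedAddCommGroup X] [NormedSpace ℝ X]
    [NormedAddCommGroup Y] [NormedSpace ℝ Y] [CompleteSpace Y]
    (q : ℝ) (hq : 1 ≤ q)
    (e : ℕ → X) (hlow : LowerEstimate e q)
    (y : ℕ → Y) (hy : IsUncondBasis y) (hup : UpperEstimate y q)
    (u : ℕ → X) (hu : DisjSupported e u) (v : ℕ → Y) (hv : DisjSupported y v)
    (hsn : SemiNormalized (fun n => ((u n, v n) : X × Y))) :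
    ∃ nk : ℕ → ℕ, StrictMono nk ∧
      ((∃ z : ℕ → X, DisjSupported e z ∧
          SeqEquiv (fun k => ((u (nk k), v (nk k)) : X × Y)) z) ∨
       (∃ z : ℕ → Y, DisjSupported y z ∧
          SeqEquiv (fun k => ((u (nk k), v (nk k)) : X × Y)) z)) := by
  obtain ⟨c, C, hc, hcC⟩ := hsn
  by_cases hu0 : Tendsto (fun n => ‖u n‖) atTop (𝓝 0)
  · obtain ⟨φ, hφ, huv⟩ := exists_strictMono_norm_le_geometric hc (fun n => (hcC n).1) hu0
    have hvφ := hv.comp_injective hφ.injective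
    obtain ⟨K, hK0, hK⟩ := hvφ.exists_norm_smul_le hy
    exact ⟨φ, hφ, Or.inr ⟨_, hvφ,
      seqEquiv_prod_snd (norm_sum_smul_le_of_norm_le_geometric hK0 hK huv)⟩⟩
  · obtain ⟨ε, hε, hfreq⟩ : ∃ ε > 0, ∃ᶠ n in atTop, ε ≤ ‖u n‖ := by
      simpa [Metric.tendsto_nhds, Filter.not_eventually, Filter.frequently_atTop] using hu0
    obtain ⟨φ, hφ, huε⟩ := extraction_of_frequently_atTop hfreq
    have huφ := hu.comp_injective hφ.injective
    obtain ⟨K, hK⟩ := norm_sum_smul_le_of_lowerEstimate_of_upperEstimate (by linarith) hlow hup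
      huφ (hv.comp_injective hφ.injective) hε huε fun n => (norm_snd_le _).trans (hcC (φ n)).2
    exact ⟨φ, hφ, Or.inl ⟨_, huφ, seqEquiv_prod_fst hK⟩⟩

theorem statement10 {X Y : Type*} [NormedAddCommGroup X] [NormedSpace ℝ X] [CompleteSpace X]
    [NormedAddCommGroup Y] [NormedSpace ℝ Y] [CompleteSpace Y]
    (q : ℝ) (hq : 1 ≤ q)
    (e : ℕ → X) (he : IsUncondBasis e) (hlow : LowerEstimate e q)
    (y : ℕ → Y) (hy : IsUncondBasis y) (hup : UpperEstimate y q)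
    (u : ℕ → X) (hu : DisjSupported e u) (v : ℕ → Y) (hv : DisjSupported y v)
    (hsn : SemiNormalized (fun n => ((u n, v n) : X × Y))) :
    ∃ nk : ℕ → ℕ, StrictMono nk ∧
      ((∃ z : ℕ → X, DisjSupported e z ∧
          SeqEquiv (fun k => ((u (nk k), v (nk k)) : X × Y)) z) ∨
       (∃ z : ℕ → Y, DisjSupported y z ∧
          SeqEquiv (fun k => ((u (nk k), v (nk k)) : X × Y)) z)) :=
  statement10_general q hq e hlow y hy hup u hu v hv hsn
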